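/- Let σ: A × B → k be a Hopf pairing, φ: π → Aut_Hopf(A) and ψ: π → Aut_Hopf(B) actions by Hopf automorphisms with ψ (σ,φ)-compatible, i.e., σ(φ_β(a), ψ_β(b)) = σ(a,b) for all a, b, β. Then the maps φ_β ⊗ ψ_β: D(A,B;σ,φ_α) → D(A,B;σ,φ_{βαβ⁻¹}) are algebra isomorphisms satisfying the crossing axioms: they intertwine the comultiplications Δ_{α,γ}, preserve the counit, and satisfy (φ_α⊗ψ_α)∘(φ_β⊗ψ_β) = φ_{αβ}⊗ψ_{αβ}. -/

import Mathlib

open TensorProduct Coalgebra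

/-- A Hopf pairing between two Hopf algebras `A` and `B` over a field `k`: a bilinear map
`σ : A × B → k` satisfying `σ(a, bb') = σ(a₍₁₎, b) σ(a₍₂₎, b')`,
`σ(aa', b) = σ(a, b₍₂₎) σ(a', b₍₁₎)`, `σ(a, 1) = ε(a)` and `σ(1, b) = ε(b)`. -/
structure HopfPairing (k A B : Type) [Field k] [Ring A] [HopfAlgebra k A]
    [Ring B] [HopfAlgebra k B] where
  σ : A →ₗ[k] B →ₗ[k] k
  pair_mul_right : ∀ (a : A) (b b' : B),
    σ a (b * b') = LinearMap.mul' k k (TensorProduct.map (σ.flip b) (σ.flip b') (comul (R := k) a))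
  pair_mul_left : ∀ (a a' : A) (b : B),
    σ (a * a') b = LinearMap.mul' k k (TensorProduct.map (σ a') (σ a) (comul (R := k) b))
  pair_one_right : ∀ a : A, σ a 1 = counit (R := k) a
  pair_one_left : ∀ b : B, σ 1 b = counit (R := k) b
variable (k : Type) [Field k]

/-- The iterated comultiplication `(Δ ⊗ id) ∘ Δ : A → (A ⊗ A) ⊗ A`. -/
noncomputable def comul3 (A : Type) [Ring A] [HopfAlgebra k A] :
    A →ₗ[k] (A ⊗[k] A) ⊗[k] A :=
  (LinearMap.rTensor A (Coalgebra.comul (R := k) (A := A))) ∘ₗ Coalgebra.comul (R := k) (A := A)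

/-- `m` is the product of the twisted double `D(A,B;σ,φ)`: on pure tensors it is given by
`(a ⊗ b)(a' ⊗ b') = σ(φ(a'₍₁₎), S(b₍₁₎)) σ(a'₍₃₎, b₍₃₎) (a a'₍₂₎ ⊗ b₍₂₎ b')`,
expressed via arbitrary finite representations of the iterated comultiplications. -/
def IsTwistedDoubleMul {A B : Type} [Ring A] [HopfAlgebra k A] [Ring B] [HopfAlgebra k B]
    (p : HopfPairing k A B) (φ : A →ₐ[k] A)
    (m : (A ⊗[k] B) →ₗ[k] (A ⊗[k] B) →ₗ[k] (A ⊗[k] B)) : Prop :=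
  ∀ (a a' : A) (b b' : B) (ι κ : Type) (s : Finset ι) (t : Finset κ)
    (u v w : ι → A) (pb q r : κ → B),
    comul3 k A a' = ∑ i ∈ s, (u i ⊗ₜ[k] v i) ⊗ₜ[k] w i →
    comul3 k B b = ∑ j ∈ t, (pb j ⊗ₜ[k] q j) ⊗ₜ[k] r j →
    m (a ⊗ₜ[k] b) (a' ⊗ₜ[k] b') = ∑ i ∈ s, ∑ j ∈ t,
      (p.σ (φ (u i)) (HopfAlgebra.antipode (R := k) (pb j)) * p.σ (w i) (r j)) •
        ((a * v i) ⊗ₜ[k] (q j * b'))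

/-!
Every structure map of the twisted double is assembled from the products, coproducts, counits
and antipodes of `A` and `B`, the pairing `σ` and the twist `φ_α`, and is checked on pure
tensors through Sweedler representations. The bialgebra automorphisms `φ_β`, `ψ_β` commute with
all of these: with the antipodes because `S ∘ f` and `f ∘ S` are both convolution inverses of a
bialgebra map `f`, with `σ` by compatibility, and they conjugate the twist `φ_α` into
`φ_{βαβ⁻¹}`.
-/

open HopfAlgebra WithConv

theorem BialgHom.antipode_comp {R A B : Type*} [CommSemiring R] [Semiring A] [Semiring B]
    [HopfAlgebra R A] [HopfAlgebra R B] (f : A →ₐc[R] B) :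
    antipode R ∘ₗ (f : A →ₗ[R] B) = (f : A →ₗ[R] B) ∘ₗ antipode R := by
  apply toConv_injective
  refine left_inv_eq_right_inv (a := toConv (f : A →ₗ[R] B)) (ofConv_injective ?_)
    (ofConv_injective ?_)
  · calc (toConv (antipode R ∘ₗ (f : A →ₗ[R] B)) * toConv (f : A →ₗ[R] B)).ofConv
        = (toConv (antipode R) * toConv .id : WithConv (B →ₗ[R] B)).ofConv ∘ₗ
            (f : A →ₗc[R] B).toLinearMap := by
          rw [LinearMap.convMul_comp_coalgHom_distrib]; rfl
      _ = (1 : WithConv (A →ₗ[R] B)).ofConv := by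
          rw [LinearMap.antipode_mul_id, LinearMap.convOne_comp_coalgHom]
  · calc (toConv (f : A →ₗ[R] B) * toConv ((f : A →ₗ[R] B) ∘ₗ antipode R)).ofConv
        = (f : A →ₐ[R] B).toLinearMap ∘ₗ
            (toConv .id * toConv (antipode R) : WithConv (A →ₗ[R] A)).ofConv := by
          rw [LinearMap.algHom_comp_convMul_distrib]; rfl
      _ = (1 : WithConv (A →ₗ[R] B)).ofConv := by
          rw [LinearMap.id_mul_antipode, LinearMap.algHom_comp_convOne]

theorem BialgHom.map_antipode {R A B : Type*} [CommSemiring R] [Semiring A] [Semiring B]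
    [HopfAlgebra R A] [HopfAlgebra R B] (f : A →ₐc[R] B) (a : A) :
    f (antipode R a) = antipode R (f a) :=
  congr($(f.antipode_comp) a).symm

universe uM uN uP in
theorem TensorProduct.exists_sum_tmul_tmul {R : Type*} {M : Type uM} {N : Type uN} {P : Type uP}
    [CommSemiring R] [AddCommMonoid M] [AddCommMonoid N] [AddCommMonoid P]
    [Module R M] [Module R N] [Module R P] (x : (M ⊗[R] N) ⊗[R] P) :
    ∃ (ι : Type (max uM uN uP)) (s : Finset ι) (u : ι → M) (v : ι → N) (w : ι → P),
      x = ∑ i ∈ s, (u i ⊗ₜ[R] v i) ⊗ₜ[R] w i := by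
  obtain ⟨s, rfl⟩ := exists_finset x
  choose f hf using fun y : M ⊗[R] N => exists_finset y
  refine ⟨_, s.sigma fun i => f i.1, fun i => i.2.1, fun i => i.2.2, fun i => i.1.2, ?_⟩
  rw [Finset.sum_sigma]
  refine Finset.sum_congr rfl fun i _ => ?_
  conv_lhs => rw [hf i.1, sum_tmul]

theorem mul'_map_counit_map {R A A' B B' F G : Type*} [CommSemiring R]
    [AddCommMonoid A] [Module R A] [Coalgebra R A] [AddCommMonoid A'] [Module R A']
    [Coalgebra R A'] [AddCommMonoid B] [Module R B] [Coalgebra R B] [AddCommMonoid B']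
    [Module R B'] [Coalgebra R B'] [FunLike F A A'] [CoalgHomClass F R A A'] [FunLike G B B']
    [CoalgHomClass G R B B'] (f : F) (g : G) (x : A ⊗[R] B) :
    (LinearMap.mul' R R ∘ₗ map counit counit) (map (f : A →ₗ[R] A') (g : B →ₗ[R] B') x)
      = (LinearMap.mul' R R ∘ₗ map counit counit) x := by
  rw [← LinearMap.comp_apply, LinearMap.comp_assoc, ← map_comp, CoalgHomClass.counit_comp,
    CoalgHomClass.counit_comp]

theorem MonoidHom.conj_apply_apply {R A π : Type*} [CommSemiring R] [Semiring A] [Algebra R A]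
    [Group π] (φ : π →* (A ≃ₐ[R] A)) (β γ : π) (a : A) :
    φ (β * γ * β⁻¹) (φ β a) = φ β (φ γ a) := by
  rw [← AlgEquiv.mul_apply, ← map_mul, inv_mul_cancel_right, map_mul, AlgEquiv.mul_apply]

section TwistedDouble

variable {k} {A A' B B' : Type} [Ring A] [HopfAlgebra k A] [Ring A'] [HopfAlgebra k A']
  [Ring B] [HopfAlgebra k B] [Ring B'] [HopfAlgebra k B']

theorem comul3_map {F : Type*} [FunLike F A A'] [CoalgHomClass F k A A'] (f : F) (a : A) :
    comul3 k A' (f a) = map (map (f : A →ₗ[k] A') f) f (comul3 k A a) := by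
  simp only [comul3, LinearMap.comp_apply]
  rw [← CoalgHomClass.map_comp_comul_apply, ← LinearMap.comp_apply (LinearMap.rTensor _ _),
    LinearMap.rTensor_comp_map, ← CoalgHomClass.map_comp_comul, LinearMap.map_rTensor]

/-- `Δ` is the comultiplication `Δ_{α,β}` of the twisted double, with `φ = φ_β`
(it does not depend on `α`). -/
def IsTwistedDoubleComul (φ : A →ₐ[k] A) (Δ : (A ⊗[k] B) →ₗ[k] (A ⊗[k] B) ⊗[k] (A ⊗[k] B)) :
    Prop :=
  ∀ (a : A) (b : B) (ι κ : Type) (s : Finset ι) (t : Finset κ) (u v : ι → A) (pb q : κ → B),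
    comul (R := k) a = ∑ i ∈ s, u i ⊗ₜ[k] v i →
    comul (R := k) b = ∑ j ∈ t, pb j ⊗ₜ[k] q j →
    Δ (a ⊗ₜ[k] b) = ∑ i ∈ s, ∑ j ∈ t, ((φ (u i)) ⊗ₜ[k] pb j) ⊗ₜ[k] (v i ⊗ₜ[k] q j)

theorem IsTwistedDoubleComul.map_comul {φ : A →ₐ[k] A} {φ' : A' →ₐ[k] A'}
    {Δ : (A ⊗[k] B) →ₗ[k] (A ⊗[k] B) ⊗[k] (A ⊗[k] B)}
    {Δ' : (A' ⊗[k] B') →ₗ[k] (A' ⊗[k] B') ⊗[k] (A' ⊗[k] B')}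
    (hΔ : IsTwistedDoubleComul φ Δ) (hΔ' : IsTwistedDoubleComul φ' Δ')
    {F G : Type*} [FunLike F A A'] [CoalgHomClass F k A A'] [FunLike G B B']
    [CoalgHomClass G k B B'] (f : F) (g : G) (hφ : ∀ a, φ' (f a) = f (φ a)) (x : A ⊗[k] B) :
    map (map (f : A →ₗ[k] A') (g : B →ₗ[k] B')) (map (f : A →ₗ[k] A') (g : B →ₗ[k] B')) (Δ x)
      = Δ' (map (f : A →ₗ[k] A') (g : B →ₗ[k] B') x) := by
  induction x using TensorProduct.induction_on with
  | zero => simp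
  | add x y hx hy => simp only [map_add, hx, hy]
  | tmul a b =>
    obtain ⟨sA, hsA⟩ := exists_finset (comul (R := k) a)
    obtain ⟨sB, hsB⟩ := exists_finset (comul (R := k) b)
    have hfa : comul (R := k) (f a) = ∑ i ∈ sA, f i.1 ⊗ₜ[k] f i.2 := by
      simp [← CoalgHomClass.map_comp_comul_apply, hsA, map_sum]
    have hgb : comul (R := k) (g b) = ∑ j ∈ sB, g j.1 ⊗ₜ[k] g j.2 := by
      simp [← CoalgHomClass.map_comp_comul_apply, hsB, map_sum]
    rw [map_tmul, LinearMap.coe_coe, LinearMap.coe_coe, hΔ a b _ _ sA sB _ _ _ _ hsA hsB,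
      hΔ' (f a) (g b) _ _ sA sB _ _ _ _ hfa hgb]
    simp [map_sum, hφ]

variable {p : HopfPairing k A B} {p' : HopfPairing k A' B'}

theorem IsTwistedDoubleMul.map_mul_tmul {φ : A →ₐ[k] A} {φ' : A' →ₐ[k] A'}
    {m : (A ⊗[k] B) →ₗ[k] (A ⊗[k] B) →ₗ[k] (A ⊗[k] B)}
    {m' : (A' ⊗[k] B') →ₗ[k] (A' ⊗[k] B') →ₗ[k] (A' ⊗[k] B')}
    (hm : IsTwistedDoubleMul k p φ m) (hm' : IsTwistedDoubleMul k p' φ' m')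
    (f : A →ₐc[k] A') (g : B →ₐc[k] B') (hσ : ∀ a b, p'.σ (f a) (g b) = p.σ a b)
    (hφ : ∀ a, φ' (f a) = f (φ a)) (a a' : A) (b b' : B) :
    map (f : A →ₗ[k] A') (g : B →ₗ[k] B') (m (a ⊗ₜ b) (a' ⊗ₜ b'))
      = m' (f a ⊗ₜ g b) (f a' ⊗ₜ g b') := by
  obtain ⟨ι, s, u, v, w, hA⟩ := exists_sum_tmul_tmul (comul3 k A a')
  obtain ⟨κ, t, pb, q, r, hB⟩ := exists_sum_tmul_tmul (comul3 k B b)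
  have hfA : comul3 k A' (f a') = ∑ i ∈ s, (f (u i) ⊗ₜ[k] f (v i)) ⊗ₜ[k] f (w i) := by
    simp [comul3_map f, hA, map_sum]
  have hgB : comul3 k B' (g b) = ∑ j ∈ t, (g (pb j) ⊗ₜ[k] g (q j)) ⊗ₜ[k] g (r j) := by
    simp [comul3_map g, hB, map_sum]
  rw [hm a a' b b' ι κ s t u v w pb q r hA hB, hm' _ _ _ _ ι κ s t _ _ _ _ _ _ hfA hgB]
  simp [map_sum, hφ, ← g.map_antipode, hσ]

theorem IsTwistedDoubleMul.map_mul {φ : A →ₐ[k] A} {φ' : A' →ₐ[k] A'}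
    {m : (A ⊗[k] B) →ₗ[k] (A ⊗[k] B) →ₗ[k] (A ⊗[k] B)}
    {m' : (A' ⊗[k] B') →ₗ[k] (A' ⊗[k] B') →ₗ[k] (A' ⊗[k] B')}
    (hm : IsTwistedDoubleMul k p φ m) (hm' : IsTwistedDoubleMul k p' φ' m')
    (f : A →ₐc[k] A') (g : B →ₐc[k] B') (hσ : ∀ a b, p'.σ (f a) (g b) = p.σ a b)
    (hφ : ∀ a, φ' (f a) = f (φ a)) (x y : A ⊗[k] B) :
    map (f : A →ₗ[k] A') (g : B →ₗ[k] B') (m x y)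
      = m' (map (f : A →ₗ[k] A') (g : B →ₗ[k] B') x)
          (map (f : A →ₗ[k] A') (g : B →ₗ[k] B') y) := by
  induction x using TensorProduct.induction_on with
  | zero => simp
  | add x x' hx hx' => simp only [map_add, LinearMap.add_apply, hx, hx']
  | tmul a b =>
    induction y using TensorProduct.induction_on with
    | zero => simp
    | add y y' hy hy' => simp only [map_add, hy, hy']
    | tmul a' b' => simpa using hm.map_mul_tmul hm' f g hσ hφ a a' b b'

end TwistedDouble

/-- If `ψ` is a `(σ,φ)`-compatible action, the maps `φ_β ⊗ ψ_β` form a crossing of the twisted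
double: they are algebra isomorphisms `D(A,B;σ,φ_α) → D(A,B;σ,φ_{βαβ⁻¹})` intertwining the
comultiplications, preserving the counit, and composing as `(φ_α⊗ψ_α)∘(φ_β⊗ψ_β) = φ_{αβ}⊗ψ_{αβ}`. -/
theorem twistedDouble_crossing {A B : Type} [Ring A] [HopfAlgebra k A]
    [Ring B] [HopfAlgebra k B] (p : HopfPairing k A B)
    (π : Type) [Group π] (φ : π →* (A ≃ₐ[k] A)) (ψ : π →* (B ≃ₐ[k] B))
    (hφc : ∀ (g : π) (a : A), Coalgebra.comul (R := k) (φ g a)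
      = TensorProduct.map (φ g).toLinearMap (φ g).toLinearMap (Coalgebra.comul a))
    (hφe : ∀ (g : π) (a : A), Coalgebra.counit (R := k) (φ g a) = Coalgebra.counit (R := k) a)
    (hψc : ∀ (g : π) (b : B), Coalgebra.comul (R := k) (ψ g b)
      = TensorProduct.map (ψ g).toLinearMap (ψ g).toLinearMap (Coalgebra.comul b))
    (hψe : ∀ (g : π) (b : B), Coalgebra.counit (R := k) (ψ g b) = Coalgebra.counit (R := k) b)
    (hcompat : ∀ (β : π) (a : A) (b : B), p.σ (φ β a) (ψ β b) = p.σ a b)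
    (m : π → ((A ⊗[k] B) →ₗ[k] (A ⊗[k] B) →ₗ[k] (A ⊗[k] B)))
    (hm : ∀ α : π, IsTwistedDoubleMul k p (φ α).toAlgHom (m α))
    (Δfam : π → π → ((A ⊗[k] B) →ₗ[k] (A ⊗[k] B) ⊗[k] (A ⊗[k] B)))
    (hΔ : ∀ (α β : π) (a : A) (b : B) (ι κ : Type) (s : Finset ι) (t : Finset κ)
      (u v : ι → A) (pb q : κ → B),
      Coalgebra.comul (R := k) a = ∑ i ∈ s, u i ⊗ₜ[k] v i →
      Coalgebra.comul (R := k) b = ∑ j ∈ t, pb j ⊗ₜ[k] q j →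
      Δfam α β (a ⊗ₜ[k] b) = ∑ i ∈ s, ∑ j ∈ t,
        ((φ β (u i)) ⊗ₜ[k] pb j) ⊗ₜ[k] (v i ⊗ₜ[k] q j)) :
    let χ : π → ((A ⊗[k] B) →ₗ[k] (A ⊗[k] B)) :=
      fun β => TensorProduct.map (φ β).toLinearMap (ψ β).toLinearMap
    (∀ (α β : π) (x y : A ⊗[k] B),
      χ β (m α x y) = m (β * α * β⁻¹) (χ β x) (χ β y)) ∧
    (∀ β : π, χ β ((1 : A) ⊗ₜ[k] (1 : B)) = (1 : A) ⊗ₜ[k] (1 : B)) ∧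
    (∀ β : π, Function.Bijective (χ β)) ∧
    (∀ (α γ β : π) (x : A ⊗[k] B),
      TensorProduct.map (χ β) (χ β) (Δfam α γ x)
        = Δfam (β * α * β⁻¹) (β * γ * β⁻¹) (χ β x)) ∧
    (∀ (β : π) (x : A ⊗[k] B),
      (LinearMap.mul' k k ∘ₗ TensorProduct.map (Coalgebra.counit (R := k) (A := A))
        (Coalgebra.counit (R := k) (A := B))) (χ β x)
      = (LinearMap.mul' k k ∘ₗ TensorProduct.map (Coalgebra.counit (R := k) (A := A))
        (Coalgebra.counit (R := k) (A := B))) x) ∧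
    (∀ (α β : π) (x : A ⊗[k] B), χ α (χ β x) = χ (α * β) x) := by
  intro χ
  let Φ (g : π) : A →ₐc[k] A :=
    .ofAlgHom (φ g) (AlgHom.ext (hφe g)) (AlgHom.ext fun a => (hφc g a).symm)
  let Ψ (g : π) : B →ₐc[k] B :=
    .ofAlgHom (ψ g) (AlgHom.ext (hψe g)) (AlgHom.ext fun b => (hψc g b).symm)
  have hconj (β α : π) (a : A) : φ (β * α * β⁻¹) (Φ β a) = Φ β (φ α a) :=
    φ.conj_apply_apply β α a
  have hΔfam (α γ : π) : IsTwistedDoubleComul (φ γ : A →ₐ[k] A) (Δfam α γ) := hΔ α γ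
  refine ⟨fun α β x y => (hm α).map_mul (hm _) (Φ β) (Ψ β) (hcompat β) (hconj β α) x y,
    fun β => by simp [χ],
    fun β => (TensorProduct.congr (φ β).toLinearEquiv (ψ β).toLinearEquiv).bijective,
    fun α γ β x => (hΔfam α γ).map_comul (hΔfam _ _) (Φ β) (Ψ β) (hconj β γ) x,
    fun β x => mul'_map_counit_map (Φ β) (Ψ β) x,
    fun α β x => ?_⟩
  simp only [χ, map_map, map_mul]
  rfl
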